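/- arXiv:2511.21128 — 2 statements merged into one kernel-verified Lean document; each statement's English description precedes it below -/
import Mathlib

section
/- Let B be a Boolean algebra and X_B its Stone space. For each a ∈ B the set â := {f ∈ X_B | f a = true} is clopen in X_B, and the map η_B : B → Clopens(X_B), a ↦ â, is an isomorphism of Boolean algebras (it is bijective and satisfies η_B(⊥) = ∅, η_B(⊤) = X_B, η_B(a ⊓ b) = η_B(a) ∩ η_B(b), η_B(a ⊔ b) = η_B(a) ∪ η_B(b), and η_B(aᶜ) = X_B \ η_B(a)). -/
/-!
A point of `X_B` is exactly a bounded lattice homomorphism `B → Bool`, e.g. the indicator of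
the complement of a prime ideal; by the prime ideal theorem such points separate `a ≰ b`, so
`a ↦ â` is an order embedding. `X_B` is closed in the compact space `B → Bool`, hence compact,
and the sets `â` form a basis: a basic open set of the product fixes finitely many coordinates
`f i = bᵢ`, and is `â` for `a` the meet of the `i` with `bᵢ = true` and the `iᶜ` with
`bᵢ = false`. A clopen set, being compact and open, is then a finite union of sets `â`, which is
the `â` of their join.
-/

/-- The defining conditions for a point of the Stone space of a Boolean algebra `B`. -/
def IsStonePoint {B : Type*} [BooleanAlgebra B] (f : B → Bool) : Prop :=
  f ⊥ = false ∧ f ⊤ = true ∧ (∀ a b : B, f (a ⊓ b) = (f a && f b)) ∧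
    (∀ a b : B, f (a ⊔ b) = (f a || f b))

/-- The Stone space of a Boolean algebra `B`, as a subspace of the product
`B → Bool` with `Bool` discrete. -/
def StoneSpace (B : Type*) [BooleanAlgebra B] : Type _ :=
  {f : B → Bool // IsStonePoint f}

instance (B : Type*) [BooleanAlgebra B] : TopologicalSpace (StoneSpace B) :=
  instTopologicalSpaceSubtype

namespace IsStonePoint

variable {B : Type*} [BooleanAlgebra B] {f : B → Bool}

def toBoundedLatticeHom (hf : IsStonePoint f) : BoundedLatticeHom B Bool where
  toFun := f
  map_sup' := hf.2.2.2
  map_inf' := hf.2.2.1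
  map_top' := hf.2.1
  map_bot' := hf.1

lemma monotone (hf : IsStonePoint f) : Monotone f :=
  OrderHomClass.mono hf.toBoundedLatticeHom

lemma map_compl (hf : IsStonePoint f) (a : B) : f aᶜ = !f a :=
  map_compl' hf.toBoundedLatticeHom a

lemma apply_ite_compl_eq_true_iff (hf : IsStonePoint f) (a : B) (b : Bool) :
    f (if b then a else aᶜ) = true ↔ f a = b := by
  cases b <;> simp [hf.map_compl]

lemma finset_inf_eq_true_iff (hf : IsStonePoint f) {ι : Type*} (s : Finset ι) (g : ι → B) :
    f (s.inf g) = true ↔ ∀ i ∈ s, f (g i) = true := by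
  change hf.toBoundedLatticeHom (s.inf g) = ⊤ ↔
    ∀ i ∈ s, hf.toBoundedLatticeHom (g i) = ⊤
  rw [map_finset_inf, Finset.inf_eq_top_iff]
  rfl

lemma finset_sup_eq_true_iff (hf : IsStonePoint f) {ι : Type*} (s : Finset ι) (g : ι → B) :
    f (s.sup g) = true ↔ ∃ i ∈ s, f (g i) = true := by
  simp only [← Bool.not_eq_false]
  change hf.toBoundedLatticeHom (s.sup g) ≠ ⊥ ↔
    ∃ i ∈ s, hf.toBoundedLatticeHom (g i) ≠ ⊥
  simp only [map_finset_sup, ne_eq, Finset.sup_eq_bot_iff, Function.comp_apply, not_forall,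
    exists_prop]

end IsStonePoint

section StonePoints

variable {B : Type*} [BooleanAlgebra B]

open Classical in
lemma Order.Ideal.IsPrime.isStonePoint {J : Order.Ideal B} (hJ : J.IsPrime) :
    IsStonePoint fun x => !decide (x ∈ J) := by
  refine ⟨by simp [J.bot_mem], by simp [hJ.top_notMem], fun a b => ?_, fun a b => ?_⟩
  · have : a ⊓ b ∈ J ↔ a ∈ J ∨ b ∈ J :=
      ⟨hJ.mem_or_mem, fun h => h.elim (J.lower inf_le_left) (J.lower inf_le_right)⟩
    simp [this]
  · simp [Order.Ideal.sup_mem_iff]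

lemma exists_isStonePoint_of_not_le {a b : B} (h : ¬a ≤ b) :
    ∃ f : B → Bool, IsStonePoint f ∧ f a = true ∧ f b = false := by
  obtain ⟨J, hJ, hbJ, haJ⟩ :=
    DistribLattice.prime_ideal_of_disjoint_filter_ideal (F := .principal a) (I := .principal b)
      (Set.disjoint_left.2 fun x hax hxb => h (le_trans hax hxb))
  refine ⟨_, hJ.isStonePoint, ?_, ?_⟩
  · simpa using Set.disjoint_left.1 haJ (Order.PFilter.mem_principal.2 le_rfl)
  · simpa using hbJ Order.Ideal.mem_principal_self

lemma isClosed_setOf_isStonePoint : IsClosed {f : B → Bool | IsStonePoint f} := by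
  simp only [IsStonePoint, Set.ofPred_and, Set.ofPred_forall]
  refine .inter ?_ (.inter ?_ (.inter ?_ ?_))
  all_goals
    repeat (apply isClosed_iInter; intro)
    exact isClosed_eq (by fun_prop) (by fun_prop)

end StonePoints

namespace StoneSpace

open TopologicalSpace

variable {B : Type*} [BooleanAlgebra B]

instance : CompactSpace (StoneSpace B) :=
  isCompact_iff_compactSpace.mp isClosed_setOf_isStonePoint.isCompact

lemma isClopen_setOf_apply (a : B) : IsClopen {f : StoneSpace B | f.1 a = true} :=
  (isClopen_discrete {true}).preimage ((continuous_apply a).comp continuous_subtype_val)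

def basicClopen (a : B) : Clopens (StoneSpace B) :=
  ⟨{f | f.1 a = true}, isClopen_setOf_apply a⟩

@[simp]
lemma mem_basicClopen {a : B} {f : StoneSpace B} : f ∈ basicClopen a ↔ f.1 a = true :=
  Iff.rfl

lemma coe_basicClopen_bot : (basicClopen (⊥ : B) : Set (StoneSpace B)) = ∅ := by
  ext f; simp [f.2.1]

lemma coe_basicClopen_top : (basicClopen (⊤ : B) : Set (StoneSpace B)) = Set.univ := by
  ext f; simp [f.2.2.1]

lemma coe_basicClopen_inf (a b : B) :
    (basicClopen (a ⊓ b) : Set (StoneSpace B)) =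
      (basicClopen a : Set (StoneSpace B)) ∩ basicClopen b := by
  ext f; simp [f.2.2.2.1 a b]

lemma coe_basicClopen_sup (a b : B) :
    (basicClopen (a ⊔ b) : Set (StoneSpace B)) =
      (basicClopen a : Set (StoneSpace B)) ∪ basicClopen b := by
  ext f; simp [f.2.2.2.2 a b]

lemma coe_basicClopen_compl (a : B) :
    (basicClopen aᶜ : Set (StoneSpace B)) = (basicClopen a : Set (StoneSpace B))ᶜ := by
  ext f; simp [f.2.map_compl a]

lemma basicClopen_le_basicClopen_iff {a b : B} : basicClopen a ≤ basicClopen b ↔ a ≤ b := by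
  refine ⟨fun h => ?_, fun h f (hf : f.1 a = true) =>
    top_le_iff.1 (hf.symm.trans_le (f.2.monotone h))⟩
  by_contra hab
  obtain ⟨f, hf, ha, hb⟩ := exists_isStonePoint_of_not_le hab
  have hb' : f b = true := h (show (⟨f, hf⟩ : StoneSpace B) ∈ basicClopen a from ha)
  simp [hb] at hb'

lemma basicClopen_injective : Function.Injective (basicClopen (B := B)) := fun _ _ h =>
  le_antisymm (basicClopen_le_basicClopen_iff.1 h.le) (basicClopen_le_basicClopen_iff.1 h.ge)

lemma isTopologicalBasis_basicClopen :
    IsTopologicalBasis (Set.range fun a : B => (basicClopen a : Set (StoneSpace B))) := by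
  refine isTopologicalBasis_of_isOpen_of_nhds
    (by rintro _ ⟨a, rfl⟩; exact (basicClopen a).isOpen) fun f U hfU hU => ?_
  obtain ⟨W, hW, rfl⟩ := isOpen_induced_iff.1 hU
  obtain ⟨I, u, hu, hIu⟩ := isOpen_pi_iff.1 hW f.1 hfU
  have mem_iff (g : StoneSpace B) :
      g ∈ basicClopen (I.inf fun i => if f.1 i then i else iᶜ) ↔
        ∀ i ∈ I, g.1 i = f.1 i := by
    simp only [mem_basicClopen, g.2.finset_inf_eq_true_iff, g.2.apply_ite_compl_eq_true_iff]
  refine ⟨_, ⟨_, rfl⟩, (mem_iff f).2 fun _ _ => rfl, fun g hg => hIu fun i hi => ?_⟩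
  rw [(mem_iff g).1 hg i hi]
  exact (hu i hi).2

lemma coe_basicClopen_finset_sup {ι : Type*} (s : Finset ι) (g : ι → B) :
    (basicClopen (s.sup g) : Set (StoneSpace B)) = ⋃ i ∈ s, basicClopen (g i) := by
  ext f
  simp [f.2.finset_sup_eq_true_iff]

lemma basicClopen_surjective : Function.Surjective (basicClopen (B := B)) := by
  intro K
  obtain ⟨s, hs, hK⟩ := (isCompact_open_iff_eq_finite_iUnion_of_isTopologicalBasis _
    isTopologicalBasis_basicClopen (fun a => (basicClopen a).isClosed.isCompact)
    (K : Set (StoneSpace B))).1 ⟨K.isClosed.isCompact, K.isOpen⟩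
  refine ⟨hs.toFinset.sup id, SetLike.coe_injective ?_⟩
  simp [coe_basicClopen_finset_sup, hK]

end StoneSpace

open TopologicalSpace in
/-- Stone's representation theorem: for every `a ∈ B`, the set
`â = {f ∈ X_B | f a = true}` is clopen, and `a ↦ â` is an isomorphism of Boolean
algebras from `B` onto the clopen subsets of the Stone space `X_B`. -/
theorem stone_representation (B : Type*) [BooleanAlgebra B] :
    (∀ a : B, IsClopen {f : StoneSpace B | f.1 a = true}) ∧
    ∃ η : B → Clopens (StoneSpace B),
      (∀ a : B, (η a : Set (StoneSpace B)) = {f : StoneSpace B | f.1 a = true}) ∧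
      Function.Bijective η ∧
      (η ⊥ : Set (StoneSpace B)) = ∅ ∧
      (η ⊤ : Set (StoneSpace B)) = Set.univ ∧
      (∀ a b : B, (η (a ⊓ b) : Set (StoneSpace B)) = (η a : Set (StoneSpace B)) ∩ (η b : Set (StoneSpace B))) ∧
      (∀ a b : B, (η (a ⊔ b) : Set (StoneSpace B)) = (η a : Set (StoneSpace B)) ∪ (η b : Set (StoneSpace B))) ∧
      (∀ a : B, (η aᶜ : Set (StoneSpace B)) = Set.univ \ (η a : Set (StoneSpace B))) := by
  open StoneSpace in
  exact ⟨isClopen_setOf_apply, basicClopen, fun _ => rfl,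
    ⟨basicClopen_injective, basicClopen_surjective⟩, coe_basicClopen_bot, coe_basicClopen_top,
    coe_basicClopen_inf, coe_basicClopen_sup,
    fun a => (coe_basicClopen_compl a).trans (Set.compl_eq_univ_sdiff _)⟩
end

section
/- Let X be a compact, Hausdorff, totally disconnected topological space. Then X is extremally disconnected (the closure of every open subset of X is open) if and only if the Boolean algebra Clopens(X) of clopen subsets of X is complete, in the sense that every set S of clopen subsets of X has a least upper bound in Clopens(X) (there exists a clopen C that is a least upper bound of S with respect to inclusion). -/
/-!
In any space, a clopen set equal to the closure of `⋃ S` is the least upper bound of `S` in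
`Clopens X`. When the clopens form a basis the converse holds: if a point `x` of the supremum `C`
had a basic clopen neighbourhood `V` missing `⋃ S`, then `C \ V` would be a smaller upper bound.
So suprema exist exactly when closures of unions of clopens are clopen, and every open set is
such a union.
-/

open Set TopologicalSpace

namespace TopologicalSpace.Clopens

variable {X : Type*} [TopologicalSpace X]

theorem isLUB_of_coe_eq_closure {S : Set (Clopens X)} {C : Clopens X}
    (hC : (C : Set X) = closure (⋃ s ∈ S, (s : Set X))) : IsLUB S C := by
  refine ⟨fun s hs => ?_, fun D hD => ?_⟩
  · show (s : Set X) ⊆ C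
    exact hC ▸ (subset_biUnion_of_mem hs).trans subset_closure
  · show (C : Set X) ⊆ D
    exact hC ▸ closure_minimal (iUnion₂_subset fun s hs => hD hs) D.isClosed

theorem coe_eq_closure_of_isLUB (hB : IsTopologicalBasis {s : Set X | IsClopen s})
    {S : Set (Clopens X)} {C : Clopens X} (hC : IsLUB S C) :
    (C : Set X) = closure (⋃ s ∈ S, (s : Set X)) := by
  refine Subset.antisymm (fun x hxC => ?_)
    (closure_minimal (iUnion₂_subset fun s hs => hC.1 hs) C.isClosed)
  rw [hB.mem_closure_iff]
  intro V hV hxV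
  by_contra hdisj
  have hCV : C ≤ C \ ⟨V, hV⟩ := hC.2 fun s hs y hy =>
    ⟨hC.1 hs hy, fun hyV => hdisj ⟨y, hyV, mem_biUnion hs hy⟩⟩
  exact (hCV hxC).2 hxV

theorem isLUB_iff_coe_eq_closure (hB : IsTopologicalBasis {s : Set X | IsClopen s})
    {S : Set (Clopens X)} {C : Clopens X} :
    IsLUB S C ↔ (C : Set X) = closure (⋃ s ∈ S, (s : Set X)) :=
  ⟨coe_eq_closure_of_isLUB hB, isLUB_of_coe_eq_closure⟩

theorem biUnion_subset_eq (hB : IsTopologicalBasis {s : Set X | IsClopen s}) {U : Set X}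
    (hU : IsOpen U) : ⋃ s ∈ {s : Clopens X | (s : Set X) ⊆ U}, (s : Set X) = U := by
  refine Subset.antisymm (iUnion₂_subset fun s hs => hs) fun x hx => ?_
  obtain ⟨V, hV, hxV, hVU⟩ := hB.exists_subset_of_mem_open hx hU
  exact mem_biUnion (x := ⟨V, hV⟩) hVU hxV

end TopologicalSpace.Clopens

open TopologicalSpace in
/-- A Stone space (compact, Hausdorff, totally disconnected) is extremally
disconnected if and only if its Boolean algebra of clopen subsets is complete,
i.e. every set of clopens has a least upper bound. -/
theorem extremallyDisconnected_iff_clopens_complete (X : Type*) [TopologicalSpace X]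
    [CompactSpace X] [T2Space X] [TotallyDisconnectedSpace X] :
    ExtremallyDisconnected X ↔ ∀ S : Set (Clopens X), ∃ C : Clopens X, IsLUB S C := by
  have hB : IsTopologicalBasis {s : Set X | IsClopen s} := isTopologicalBasis_isClopen
  refine ⟨fun hED S => ?_, fun hcomplete => ⟨fun U hU => ?_⟩⟩
  · have hopen := hED.open_closure (⋃ s ∈ S, (s : Set X)) (isOpen_biUnion fun s _ => s.isOpen)
    exact ⟨⟨_, isClosed_closure, hopen⟩, Clopens.isLUB_of_coe_eq_closure rfl⟩
  · obtain ⟨C, hC⟩ := hcomplete {s : Clopens X | (s : Set X) ⊆ U}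
    rw [← Clopens.biUnion_subset_eq hB hU, ← (Clopens.isLUB_iff_coe_eq_closure hB).1 hC]
    exact C.isOpen
end
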